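/- arXiv:1210.3398 — 2 statements merged into one kernel-verified Lean document; each statement's English description precedes it below -/
import Mathlib

section
/- Let γ be a translation invariant generalized limit on L∞(0,∞) and let x ∈ L∞(0,∞) be uniformly continuous. Then γ(x) ≤ lim_{t→∞} sup_{h≥0} (1/t)∫₀^t x(s+h) ds. -/
open Real Filter MeasureTheory

noncomputable section

/-- A function on `(0,∞)` (modelled on all of `ℝ`) is (essentially) bounded. -/
def Bdd (f : ℝ → ℝ) : Prop := ∃ C, ∀ t, |f t| ≤ C

/-- A generalized limit: a positive, normalized linear functional on `L∞(0,∞)`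
(modelled as bounded functions `ℝ → ℝ`) which extends the limit at infinity. -/
structure GenLimit where
  ω : (ℝ → ℝ) → ℝ
  add : ∀ f g, Bdd f → Bdd g → ω (f + g) = ω f + ω g
  smul : ∀ (c : ℝ) f, Bdd f → ω (c • f) = c * ω f
  pos : ∀ f, Bdd f → (∀ t, 0 ≤ f t) → 0 ≤ ω f
  lim : ∀ f (c : ℝ), Bdd f → Tendsto f atTop (nhds c) → ω f = c

/-- Exponentiation invariance: `ω(x ∘ (t ↦ t^a)) = ω(x)` for all `a > 0`. -/
def GenLimit.ExpInvariant (γ : GenLimit) : Prop :=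
  ∀ f, Bdd f → ∀ a > (0:ℝ), γ.ω (fun t => f (t ^ a)) = γ.ω f

/-- Dilation invariance: `ω(x ∘ (t ↦ βt)) = ω(x)` for all `β > 0`. -/
def GenLimit.DilInvariant (γ : GenLimit) : Prop :=
  ∀ f, Bdd f → ∀ β > (0:ℝ), γ.ω (fun t => f (β * t)) = γ.ω f

/-- Translation invariance: `ω(x(·+l)) = ω(x)` for all `l > 0`. -/
def GenLimit.TransInvariant (γ : GenLimit) : Prop :=
  ∀ f, Bdd f → ∀ l > (0:ℝ), γ.ω (fun t => f (t + l)) = γ.ω f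

/-! Translation invariance gives `γ x = γ xₙ` for the average `xₙ h = n⁻¹ ∑_{k<n} x (h + k t/n)`
of `n` translates of `x`. For `n` large, uniform continuity makes `xₙ h - ε` a lower Riemann sum
of `t⁻¹ ∫₀ᵗ x (s + h) ds`, uniformly in `h`, so positivity of `γ` (which only sees `h ≥ 0`) gives
`γ x ≤ sup_{h ≥ 0} t⁻¹ ∫₀ᵗ x (s + h) ds + ε` for every `t > 0`, hence also for the `limsup`. -/

def shiftAverage (f : ℝ → ℝ) (d : ℝ) (n : ℕ) : ℝ → ℝ :=
  fun h => (n : ℝ)⁻¹ * ∑ k ∈ Finset.range n, f (h + k * d)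

lemma shiftAverage_eq_smul_sum (f : ℝ → ℝ) (d : ℝ) (n : ℕ) :
    shiftAverage f d n = (n : ℝ)⁻¹ • ∑ k ∈ Finset.range n, fun h => f (h + k * d) := by
  ext h; simp [shiftAverage, Finset.sum_apply]

namespace Bdd

lemma const (c : ℝ) : Bdd fun _ => c := ⟨|c|, fun _ => le_rfl⟩

lemma comp {f : ℝ → ℝ} (hf : Bdd f) (φ : ℝ → ℝ) : Bdd fun t => f (φ t) :=
  let ⟨C, hC⟩ := hf; ⟨C, fun t => hC (φ t)⟩

lemma add {f g : ℝ → ℝ} (hf : Bdd f) (hg : Bdd g) : Bdd (f + g) :=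
  let ⟨C, hC⟩ := hf
  let ⟨D, hD⟩ := hg
  ⟨C + D, fun t => (abs_add_le _ _).trans (add_le_add (hC t) (hD t))⟩

lemma smul {f : ℝ → ℝ} (hf : Bdd f) (c : ℝ) : Bdd (c • f) :=
  let ⟨C, hC⟩ := hf
  ⟨|c| * C, fun t => by
    rw [Pi.smul_apply, smul_eq_mul, abs_mul]
    exact mul_le_mul_of_nonneg_left (hC t) (abs_nonneg c)⟩

lemma sub {f g : ℝ → ℝ} (hf : Bdd f) (hg : Bdd g) : Bdd (f - g) := by
  simpa [sub_eq_add_neg] using hf.add (hg.smul (-1))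

lemma finsetSum {ι : Type*} (s : Finset ι) {f : ι → ℝ → ℝ} (hf : ∀ i ∈ s, Bdd (f i)) :
    Bdd (∑ i ∈ s, f i) :=
  Finset.sum_induction f Bdd (fun _ _ => add) (const 0) hf

lemma shiftAverage {f : ℝ → ℝ} (hf : Bdd f) (d : ℝ) (n : ℕ) : Bdd (shiftAverage f d n) := by
  rw [shiftAverage_eq_smul_sum]
  exact (finsetSum _ fun k _ => hf.comp _).smul _

end Bdd

namespace GenLimit

variable (γ : GenLimit) {f g : ℝ → ℝ}

lemma omega_const (c : ℝ) : γ.ω (fun _ => c) = c :=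
  γ.lim _ c (Bdd.const c) tendsto_const_nhds

lemma omega_sub (hf : Bdd f) (hg : Bdd g) : γ.ω (f - g) = γ.ω f - γ.ω g := by
  rw [sub_eq_add_neg, ← neg_one_smul ℝ g, γ.add _ _ hf (hg.smul _), γ.smul _ _ hg]
  ring

lemma omega_mono (hf : Bdd f) (hg : Bdd g) (hfg : ∀ t, f t ≤ g t) : γ.ω f ≤ γ.ω g :=
  sub_nonneg.1 <| γ.omega_sub hg hf ▸ γ.pos _ (hg.sub hf) fun t => sub_nonneg.2 (hfg t)

lemma omega_congr_atTop (hf : Bdd f) (hg : Bdd g) (hfg : f =ᶠ[atTop] g) : γ.ω f = γ.ω g := by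
  refine sub_eq_zero.1 (γ.omega_sub hf hg ▸ γ.lim _ 0 (hf.sub hg) ?_)
  exact tendsto_const_nhds.congr' (hfg.mono fun t ht => by simp [ht])

lemma omega_le_of_forall_nonneg_le (hf : Bdd f) {C : ℝ} (hC : ∀ t, 0 ≤ t → f t ≤ C) :
    γ.ω f ≤ C := by
  have hcut : γ.ω f = γ.ω fun t => f (max t 0) :=
    γ.omega_congr_atTop hf (hf.comp _) <| (eventually_ge_atTop 0).mono fun t ht => by
      simp [max_eq_left ht]
  rw [hcut, ← γ.omega_const C]
  exact γ.omega_mono (hf.comp _) (Bdd.const C) fun t => hC _ (le_max_right t 0)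

lemma omega_finsetSum {ι : Type*} (s : Finset ι) {f : ι → ℝ → ℝ} (hf : ∀ i ∈ s, Bdd (f i)) :
    γ.ω (∑ i ∈ s, f i) = ∑ i ∈ s, γ.ω (f i) := by
  induction s using Finset.cons_induction with
  | empty => exact γ.omega_const 0
  | cons i s hi ih =>
    rw [Finset.forall_mem_cons] at hf
    rw [Finset.sum_cons, Finset.sum_cons, γ.add _ _ hf.1 (Bdd.finsetSum s hf.2), ih hf.2]

variable {γ}

lemma TransInvariant.omega_shift (htr : γ.TransInvariant) (hf : Bdd f) {c : ℝ} (hc : 0 ≤ c) :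
    γ.ω (fun t => f (t + c)) = γ.ω f := by
  rcases hc.lt_or_eq with hc | rfl
  · exact htr f hf c hc
  · simp

lemma TransInvariant.omega_shiftAverage (htr : γ.TransInvariant) (hf : Bdd f) {d : ℝ}
    (hd : 0 ≤ d) {n : ℕ} (hn : n ≠ 0) : γ.ω (shiftAverage f d n) = γ.ω f := by
  have hshift : ∀ k ∈ Finset.range n, Bdd fun h => f (h + k * d) := fun k _ => hf.comp _
  rw [shiftAverage_eq_smul_sum, γ.smul _ _ (Bdd.finsetSum _ hshift), γ.omega_finsetSum _ hshift,
    Finset.sum_congr rfl fun k _ => htr.omega_shift hf (by positivity), Finset.sum_const,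
    Finset.card_range, nsmul_eq_mul, inv_mul_cancel_left₀ (Nat.cast_ne_zero.2 hn)]

end GenLimit

section RiemannSums

variable {x : ℝ → ℝ}

lemma mul_le_integral_of_le_on_Icc (hx : Continuous x) {b d c : ℝ} (hd : 0 ≤ d)
    (hc : ∀ s ∈ Set.Icc b (b + d), c ≤ x s) : c * d ≤ ∫ s in b..b + d, x s := by
  calc c * d = ∫ _ in b..b + d, c := by simp [mul_comm]
    _ ≤ ∫ s in b..b + d, x s :=
      intervalIntegral.integral_mono_on (by linarith) intervalIntegrable_const
        (hx.intervalIntegrable _ _) hc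

lemma sum_sub_mul_le_integral (hx : Continuous x) {d ε : ℝ} (hd : 0 ≤ d)
    (hosc : ∀ u v, u ≤ v → v ≤ u + d → x u - ε ≤ x v) (a : ℝ) (n : ℕ) :
    ∑ k ∈ Finset.range n, (x (a + k * d) - ε) * d ≤ ∫ s in a..a + n * d, x s := by
  induction n with
  | zero => simp
  | succ n ih =>
    have hend : a + ↑(n + 1) * d = a + n * d + d := by push_cast; ring
    rw [Finset.sum_range_succ, hend, ← intervalIntegral.integral_add_adjacent_intervals
      (hx.intervalIntegrable _ _) (hx.intervalIntegrable _ _)]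
    exact add_le_add ih <| mul_le_integral_of_le_on_Icc hx hd fun s hs => hosc _ _ hs.1 hs.2

lemma average_sub_le_average_integral (hx : Continuous x) {d ε : ℝ} (hd : 0 < d)
    (hosc : ∀ u v, u ≤ v → v ≤ u + d → x u - ε ≤ x v) {n : ℕ} (hn : n ≠ 0) (h : ℝ) :
    shiftAverage x d n h - ε ≤ (n * d)⁻¹ * ∫ s in (0 : ℝ)..n * d, x (s + h) := by
  have hsum : (n * d) * (shiftAverage x d n h - ε) =
      ∑ k ∈ Finset.range n, (x (h + k * d) - ε) * d := by
    rw [shiftAverage, ← Finset.sum_mul, Finset.sum_sub_distrib, Finset.sum_const,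
      Finset.card_range, nsmul_eq_mul]
    field_simp
  rw [le_inv_mul_iff₀ (by positivity), hsum, intervalIntegral.integral_comp_add_right, zero_add,
    add_comm _ h]
  exact sum_sub_mul_le_integral hx hd.le hosc h n

lemma average_integral_le (hx : Continuous x) {C : ℝ} (hC : ∀ s, x s ≤ C) {t : ℝ} (ht : 0 < t)
    (h : ℝ) : t⁻¹ * ∫ s in (0 : ℝ)..t, x (s + h) ≤ C := by
  rw [inv_mul_le_iff₀ ht]
  calc ∫ s in (0 : ℝ)..t, x (s + h) ≤ ∫ _ in (0 : ℝ)..t, C :=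
        intervalIntegral.integral_mono_on ht.le
          ((hx.comp (continuous_add_const h)).intervalIntegrable _ _)
          intervalIntegrable_const fun s _ => hC _
    _ = t * C := by simp

end RiemannSums

lemma GenLimit.TransInvariant.omega_le_iSup_average_integral {γ : GenLimit}
    (htr : γ.TransInvariant) {x : ℝ → ℝ} (hx : Bdd x) (hu : UniformContinuous x) {t : ℝ}
    (ht : 0 < t) : γ.ω x ≤ ⨆ h : Set.Ici (0 : ℝ), t⁻¹ * ∫ s in (0 : ℝ)..t, x (s + ↑h) := by
  obtain ⟨C, hC⟩ := hx
  have hbdd :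
      BddAbove (Set.range fun h : Set.Ici (0 : ℝ) => t⁻¹ * ∫ s in (0 : ℝ)..t, x (s + ↑h)) :=
    ⟨C, Set.forall_mem_range.2 fun h =>
      average_integral_le hu.continuous (fun s => (le_abs_self _).trans (hC s)) ht h⟩
  refine le_of_forall_pos_le_add fun ε hε => ?_
  obtain ⟨δ, hδ, hδx⟩ := Metric.uniformContinuous_iff.1 hu ε hε
  obtain ⟨n, hn⟩ := exists_nat_gt (t / δ)
  have hn0 : (0 : ℝ) < n := (div_pos ht hδ).trans hn
  have hn0' : n ≠ 0 := (Nat.cast_pos.1 hn0).ne'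
  set d := t / n
  have hd : 0 < d := div_pos ht hn0
  have hnd : n * d = t := mul_div_cancel₀ t hn0.ne'
  have hosc : ∀ u v, u ≤ v → v ≤ u + d → x u - ε ≤ x v := fun u v huv hvu => by
    have hdδ : d < δ := (div_lt_iff₀ hn0).2 (by rwa [div_lt_iff₀ hδ, mul_comm] at hn)
    have hdist : dist v u < δ := by rw [Real.dist_eq, abs_of_nonneg (by linarith)]; linarith
    linarith [abs_sub_lt_iff.1 (Real.dist_eq _ _ ▸ hδx hdist)]
  rw [← htr.omega_shiftAverage ⟨C, hC⟩ hd.le hn0']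
  refine γ.omega_le_of_forall_nonneg_le (Bdd.shiftAverage ⟨C, hC⟩ d n) fun h hh => ?_
  have hle := average_sub_le_average_integral hu.continuous hd hosc hn0' h
  rw [hnd] at hle
  linarith [le_ciSup hbdd (⟨h, hh⟩ : Set.Ici (0 : ℝ))]

/-- Sucheston-type upper bound for translation invariant generalized limits of
uniformly continuous functions. -/
theorem transInvariant_le_sucheston (γ : GenLimit) (htr : γ.TransInvariant)
    (x : ℝ → ℝ) (hx : Bdd x) (hu : UniformContinuous x) :
    γ.ω x ≤ Filter.limsup
      (fun t => ⨆ h : Set.Ici (0:ℝ), t⁻¹ * ∫ s in (0:ℝ)..t, x (s + ↑h)) atTop := by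
  obtain ⟨C, hC⟩ := hx
  refine le_limsup_of_frequently_le (Eventually.frequently ?_) ⟨C, eventually_map.2 ?_⟩ <;>
    filter_upwards [eventually_gt_atTop 0] with t ht
  · exact htr.omega_le_iSup_average_integral ⟨C, hC⟩ hu ht
  · exact ciSup_le fun h =>
      average_integral_le hu.continuous (fun s => (le_abs_self _).trans (hC s)) ht h
end
end

section
/- Define z : (0,∞) → [0,∞) by z = sup_{k≥0} e^{k−e^k}·χ_{[0, e^{e^k})}. Then sup_{t>1} (1/log(1+t))∫₀^t z(s)ds < ∞; in particular z generates an element of the Dixmier ideal M_{1,∞}. -/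
/-!
Beyond `e^{e^{k-1}}` every index `j < k` has dropped out of the supremum defining `z`, and
`j ↦ e^{j - e^j}` decreases, so `z ≤ e^{k - e^k}` there. Hence the integral of `z` over
`[e^{e^{k-1}}, e^{e^k}]` is at most `e^{k - e^k} e^{e^k} = e^k`, and summing, `∫₀^{e^{e^{n-1}}} z ≤ e^n`.
For `t > 1` take `n` with `t ≤ e^{e^{n-1}}` and `e^{n-1} ≤ e log(1 + t) / log 2`.
-/

open Real Filter MeasureTheory

noncomputable section

/-- The function `z = sup_{k≥0} e^{k-e^k} χ_{[0, e^{e^k})}`. -/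
def z : ℝ → ℝ := fun t =>
  ⨆ k : ℕ, Set.indicator (Set.Ico (0:ℝ) (Real.exp (Real.exp k)))
    (fun _ => Real.exp (k - Real.exp k)) t

open Set Finset intervalIntegral

lemma sub_exp_le_sub_exp {x y : ℝ} (hx : 0 ≤ x) (hxy : x ≤ y) : y - exp y ≤ x - exp x := by
  have hexp : exp y = exp x * exp (y - x) := by rw [← exp_add, add_sub_cancel]
  nlinarith [add_one_le_exp (y - x), one_le_exp hx]

lemma antitone_exp_natCast_sub_exp : Antitone fun k : ℕ => exp ((k : ℝ) - exp k) :=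
  fun _ _ hkj => exp_le_exp.2 <| sub_exp_le_sub_exp (Nat.cast_nonneg _) (Nat.cast_le.2 hkj)

lemma sum_range_exp_le (n : ℕ) : ∑ k ∈ range n, exp (k : ℝ) ≤ exp n := by
  induction n with
  | zero => simp
  | succ n ih =>
    have h2 : (2 : ℝ) ≤ exp 1 := by linarith [add_one_le_exp (1 : ℝ)]
    rw [sum_range_succ, Nat.cast_succ, exp_add]
    nlinarith [exp_pos (n : ℝ)]

lemma exists_nat_le_exp_le_exp_one_mul {x : ℝ} (hx : 1 ≤ x) :
    ∃ m : ℕ, x ≤ exp m ∧ exp m ≤ exp 1 * x := by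
  refine ⟨⌈log x⌉₊, ?_, ?_⟩
  · calc x = exp (log x) := (exp_log (by linarith)).symm
      _ ≤ exp ⌈log x⌉₊ := exp_le_exp.2 (Nat.le_ceil _)
  · calc exp ⌈log x⌉₊ ≤ exp (1 + log x) := exp_le_exp.2 (by linarith [Nat.ceil_lt_add_one (log_nonneg hx)])
      _ = exp 1 * x := by rw [exp_add, exp_log (by linarith)]

def zBreak : ℕ → ℝ
  | 0 => 0
  | k + 1 => exp (exp k)

lemma zBreak_nonneg (k : ℕ) : 0 ≤ zBreak k := by
  cases k <;> simp only [zBreak, le_refl, (exp_pos _).le]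

lemma monotone_zBreak : Monotone zBreak := by
  refine monotone_nat_of_le_succ fun k => ?_
  cases k with
  | zero => exact (exp_pos _).le
  | succ k => exact exp_le_exp.2 <| exp_le_exp.2 <| by push_cast; linarith

lemma indicator_le_of_zBreak_le (j : ℕ) {k : ℕ} {s : ℝ} (hs : zBreak k ≤ s) :
    Set.indicator (Ico 0 (exp (exp j))) (fun _ => exp ((j : ℝ) - exp j)) s ≤
      exp ((k : ℝ) - exp k) := by
  by_cases hj : s ∈ Ico 0 (exp (exp j))
  · rw [indicator_of_mem hj]
    have hkj : k ≤ j := by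
      by_contra! hjk
      exact (monotone_zBreak hjk).trans hs |>.not_gt hj.2
    exact antitone_exp_natCast_sub_exp hkj
  · rw [indicator_of_notMem hj]
    positivity

lemma z_le_of_zBreak_le {k : ℕ} {s : ℝ} (hs : zBreak k ≤ s) : z s ≤ exp ((k : ℝ) - exp k) :=
  ciSup_le fun j => indicator_le_of_zBreak_le j hs

lemma antitoneOn_z : AntitoneOn z (Ici 0) := by
  intro s hs s' _ hss'
  refine ciSup_mono ⟨_, forall_mem_range.2 fun j => indicator_le_of_zBreak_le j (k := 0) hs⟩
    fun j => ?_
  by_cases h : s' ∈ Ico 0 (exp (exp j))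
  · rw [indicator_of_mem h, indicator_of_mem (Set.mem_Ico.2 ⟨hs, hss'.trans_lt h.2⟩)]
  · rw [indicator_of_notMem h]
    exact indicator_nonneg (fun _ _ => (exp_pos _).le) s

lemma intervalIntegrable_z {a b : ℝ} (ha : 0 ≤ a) (hb : 0 ≤ b) : IntervalIntegrable z volume a b :=
  (antitoneOn_z.mono fun _ hx => le_trans (le_min ha hb) hx.1).intervalIntegrable

lemma integral_z_zBreak_succ_le (k : ℕ) :
    ∫ s in zBreak k..zBreak (k + 1), z s ≤ exp (k : ℝ) := by
  have hle : zBreak k ≤ zBreak (k + 1) := monotone_zBreak k.le_succ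
  calc ∫ s in zBreak k..zBreak (k + 1), z s
      ≤ ∫ _ in zBreak k..zBreak (k + 1), exp ((k : ℝ) - exp k) :=
        integral_mono_on hle (intervalIntegrable_z (zBreak_nonneg _) (zBreak_nonneg _))
          intervalIntegrable_const fun s hs => z_le_of_zBreak_le hs.1
    _ = (zBreak (k + 1) - zBreak k) * exp ((k : ℝ) - exp k) := by
        rw [intervalIntegral.integral_const, smul_eq_mul]
    _ ≤ zBreak (k + 1) * exp ((k : ℝ) - exp k) := by
        gcongr
        linarith [zBreak_nonneg k]
    _ = exp (k : ℝ) := by rw [zBreak, ← exp_add, add_sub_cancel]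

lemma integral_z_zBreak_le (n : ℕ) : ∫ s in (0:ℝ)..zBreak n, z s ≤ exp (n : ℝ) := by
  rw [show (0:ℝ) = zBreak 0 from rfl, ← sum_integral_adjacent_intervals fun k _ =>
    intervalIntegrable_z (zBreak_nonneg k) (zBreak_nonneg (k + 1))]
  exact (sum_le_sum fun k _ => integral_z_zBreak_succ_le k).trans (sum_range_exp_le n)

lemma integral_z_le_of_le_zBreak {t : ℝ} {n : ℕ} (ht : 0 ≤ t) (htn : t ≤ zBreak n) :
    ∫ s in (0:ℝ)..t, z s ≤ exp (n : ℝ) := by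
  refine le_trans ?_ (integral_z_zBreak_le n)
  exact integral_mono_interval le_rfl ht htn
    (ae_of_all _ fun s => Real.iSup_nonneg fun _ => indicator_nonneg (fun _ _ => (exp_pos _).le) s)
    (intervalIntegrable_z le_rfl (zBreak_nonneg n))

theorem z_averages_bounded :
    ∃ C : ℝ, ∀ t > (1:ℝ), (Real.log (1 + t))⁻¹ * ∫ s in (0:ℝ)..t, z s ≤ C := by
  refine ⟨exp 2 / log 2, fun t ht => ?_⟩
  have hlog2 : 0 < log 2 := log_pos one_lt_two
  have hlog2_le : log 2 ≤ 1 := by linarith [log_two_lt_d9]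
  have hu : log 2 ≤ log (1 + t) := log_le_log two_pos (by linarith)
  obtain ⟨m, hxm, hmx⟩ := exists_nat_le_exp_le_exp_one_mul ((one_le_div hlog2).2 hu)
  have ht_le : t ≤ zBreak (m + 1) :=
    calc t ≤ exp (log (1 + t)) := by rw [exp_log (by linarith)]; linarith
      _ ≤ exp (exp m) := exp_le_exp.2 <| (le_div_self (by linarith) hlog2 hlog2_le).trans hxm
  rw [inv_mul_le_iff₀ (hlog2.trans_le hu)]
  calc ∫ s in (0:ℝ)..t, z s ≤ exp ((m + 1 : ℕ) : ℝ) := integral_z_le_of_le_zBreak (by linarith) ht_le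
    _ = exp 1 * exp (m : ℝ) := by rw [Nat.cast_succ, exp_add, mul_comm]
    _ ≤ exp 1 * (exp 1 * (log (1 + t) / log 2)) := by gcongr
    _ = log (1 + t) * (exp 2 / log 2) := by
        rw [show (2:ℝ) = 1 + 1 by norm_num, exp_add]
        ring
end
end
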